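/- Let G be a finite group and H a normal subgroup of G with |H| = 3 such that the quotient group G/H has at least four distinct cyclic subgroups of order 3, generated by a_1H, a_2H, a_3H, a_4H respectively. Then the subgraph of the normal subgroup based power graph Γ_H(G) induced by the set (a_1H ∪ a_2H ∪ a_3H ∪ a_4H) ∪ (a_1^2H ∪ a_2^2H ∪ a_3^2H ∪ a_4^2H) ∪ {e} is isomorphic to the join K_1 ∨ 4K_6. -/

import Mathlib

/-!
The identity is adjacent to every other vertex, because every coset has finite order in `G ⧸ H`.
Every other vertex `v` of the induced subgraph lies in `aᵢH` or `aᵢ²H`, so `⟨vH⟩ = ⟨aᵢH⟩` is cyclic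
of order 3. Two elements of the same order are power-related iff they generate the same cyclic
subgroup, so the non-identity vertices split into the cliques `aᵢH ∪ aᵢ²H`, pairwise non-adjacent
(the subgroups `⟨aᵢH⟩` are distinct), each of size `2 · |H| = 6`.
-/

/-- The vertex set of the normal subgroup based power graph: `(G \ H) ∪ {e}`. -/
def nsbVertexSet {G : Type*} [Group G] (H : Subgroup G) : Set G :=
  {x | x ∉ H} ∪ {1}

/-- The normal subgroup based power graph `Γ_H(G)`: vertices are `(G \ H) ∪ {e}` and two
distinct vertices `a`, `b` are adjacent iff `aH = b^m H` or `bH = a^n H` for some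
positive integers `m`, `n`. -/
def nsbPowerGraph (G : Type*) [Group G] (H : Subgroup G) :
    SimpleGraph (nsbVertexSet H) where
  Adj a b := (a : G) ≠ (b : G) ∧
    ((∃ m : ℕ, 0 < m ∧ (QuotientGroup.mk (a : G) : G ⧸ H) = QuotientGroup.mk ((b : G) ^ m)) ∨
     (∃ n : ℕ, 0 < n ∧ (QuotientGroup.mk (b : G) : G ⧸ H) = QuotientGroup.mk ((a : G) ^ n)))
  symm := ⟨fun a b ⟨hne, h⟩ => ⟨hne.symm, h.symm⟩⟩
  loopless := ⟨fun a ⟨hne, _⟩ => hne rfl⟩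

/-- The power graph of a group: two distinct elements are adjacent iff one is a positive
power of the other. -/
def powerGraph (K : Type*) [Group K] : SimpleGraph K where
  Adj x y := x ≠ y ∧ ((∃ m : ℕ, 0 < m ∧ x = y ^ m) ∨ (∃ n : ℕ, 0 < n ∧ y = x ^ n))
  symm := ⟨fun x y ⟨hne, h⟩ => ⟨hne.symm, h.symm⟩⟩
  loopless := ⟨fun x ⟨hne, _⟩ => hne rfl⟩

/-- The complete graph `K_n`. -/
def kGraph (n : ℕ) : SimpleGraph (Fin n) := ⊤

/-- The disjoint union `mK_n` of `m` copies of the complete graph `K_n`. -/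
def unionKGraph (m n : ℕ) : SimpleGraph (Fin m × Fin n) where
  Adj x y := x.1 = y.1 ∧ x.2 ≠ y.2
  symm := ⟨fun x y ⟨h1, h2⟩ => ⟨h1.symm, h2.symm⟩⟩
  loopless := ⟨fun x ⟨_, h⟩ => h rfl⟩

/-- The join `Γ₁ ∨ Γ₂` of two graphs: their disjoint union together with all edges
between the two parts. -/
def graphJoin {α β : Type*} (G : SimpleGraph α) (H : SimpleGraph β) :
    SimpleGraph (α ⊕ β) where
  Adj u v := match u, v with
    | Sum.inl u, Sum.inl v => G.Adj u v
    | Sum.inr u, Sum.inr v => H.Adj u v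
    | _, _ => True
  symm := ⟨fun u v => match u, v with
    | Sum.inl u, Sum.inl v => G.adj_symm
    | Sum.inr u, Sum.inr v => H.adj_symm
    | Sum.inl _, Sum.inr _ | Sum.inr _, Sum.inl _ => fun _ => trivial⟩
  loopless := ⟨fun u => by cases u <;> simp [SimpleGraph.irrefl]⟩

open Subgroup

section PowerRelation

variable {K : Type*} [Group K] [Finite K]

theorem exists_pos_pow_eq_iff_mem_zpowers {u w : K} :
    (∃ m : ℕ, 0 < m ∧ u = w ^ m) ↔ u ∈ zpowers w := by
  rw [← mem_powers_iff_mem_zpowers, Submonoid.mem_powers_iff]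
  constructor
  · rintro ⟨m, -, rfl⟩
    exact ⟨m, rfl⟩
  · rintro ⟨n, rfl⟩
    -- `w ^ n = w ^ (n + orderOf w)` makes the exponent positive
    refine ⟨n + orderOf w, by have := orderOf_pos w; omega, ?_⟩
    rw [pow_add, pow_orderOf_eq_one, mul_one]

theorem zpowers_eq_zpowers_of_mem_of_orderOf_eq {u w : K} (hu : u ∈ zpowers w)
    (h : orderOf u = orderOf w) : zpowers u = zpowers w :=
  eq_of_le_of_card_ge (zpowers_le.mpr hu) (by rw [Nat.card_zpowers, Nat.card_zpowers, h])

theorem powerRelated_iff_zpowers_eq {u w : K} (h : orderOf u = orderOf w) :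
    ((∃ m : ℕ, 0 < m ∧ u = w ^ m) ∨ (∃ n : ℕ, 0 < n ∧ w = u ^ n)) ↔
      zpowers u = zpowers w := by
  simp only [exists_pos_pow_eq_iff_mem_zpowers]
  refine ⟨?_, fun huw => Or.inl (huw ▸ mem_zpowers u)⟩
  rintro (hu | hw)
  · exact zpowers_eq_zpowers_of_mem_of_orderOf_eq hu h
  · exact (zpowers_eq_zpowers_of_mem_of_orderOf_eq hw h.symm).symm

theorem zpowers_eq_of_eq_or_eq_sq {u x : K} (hx : orderOf x = 3) (h : u = x ∨ u = x ^ 2) :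
    zpowers u = zpowers x := by
  rcases h with rfl | rfl
  · rfl
  · exact zpowers_eq_zpowers_of_mem_of_orderOf_eq (pow_mem (mem_zpowers x) 2)
      (Nat.Coprime.orderOf_pow (by rw [hx]; norm_num))

end PowerRelation

section ConeOverCliques

theorem unionKGraph_adj_iff {m n : ℕ} {p q : Fin m × Fin n} :
    (unionKGraph m n).Adj p q ↔ p ≠ q ∧ p.1 = q.1 := by
  show p.1 = q.1 ∧ p.2 ≠ q.2 ↔ _
  simp only [Ne, Prod.ext_iff]
  tauto

theorem nonempty_iso_unionKGraph {X ι : Type*} [Finite X] [Finite ι] {Γ : SimpleGraph X}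
    (π : X → ι) {m n : ℕ} (hadj : ∀ x y, Γ.Adj x y ↔ x ≠ y ∧ π x = π y)
    (hι : Nat.card ι = m) (hfiber : ∀ s, Nat.card {x // π x = s} = n) :
    Nonempty (Γ ≃g unionKGraph m n) := by
  let eι := Finite.equivFinOfCardEq hι
  let E : X ≃ Fin m × Fin n :=
    (Equiv.sigmaFiberEquiv π).symm.trans <|
      (Equiv.sigmaCongrRight fun s => Finite.equivFinOfCardEq (hfiber s)).trans <|
        (Equiv.sigmaEquivProd ι (Fin n)).trans <| Equiv.prodCongr eι (Equiv.refl _)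
  have hE : ∀ x, (E x).1 = eι (π x) := fun _ => rfl
  refine ⟨⟨E, fun {x y} => ?_⟩⟩
  rw [unionKGraph_adj_iff, hadj, E.injective.ne_iff, hE, hE, eι.injective.eq_iff]

theorem nonempty_iso_graphJoin_kGraph_one {V β : Type*} {Γ : SimpleGraph V}
    {B : SimpleGraph β} (c : V) (hc : ∀ v, v ≠ c → Γ.Adj c v)
    (e : Γ.induce {v | v ≠ c} ≃g B) : Nonempty (Γ ≃g graphJoin (kGraph 1) B) := by
  classical
  let f : Fin 1 ⊕ β ≃ V :=
    (Equiv.sumCongr (Equiv.ofUnique (Fin 1) {v // v = c}) e.symm.toEquiv).trans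
      (Equiv.sumCompl (· = c))
  refine ⟨SimpleGraph.Iso.symm ⟨f, fun {u w} => ?_⟩⟩
  rcases u with i | y <;> rcases w with j | z
  · exact iff_of_false Γ.irrefl (fun h => h (Subsingleton.elim i j))
  · exact iff_of_true (hc _ (e.symm z).2) trivial
  · exact iff_of_true (hc _ (e.symm y).2).symm trivial
  · exact e.symm.map_adj_iff

end ConeOverCliques

section NsbPowerGraph

variable {G : Type*} [Group G] {H : Subgroup G}

theorem one_mem_nsbVertexSet : (1 : G) ∈ nsbVertexSet H := Or.inr rfl

variable [H.Normal] [Finite G]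

theorem nsbPowerGraph_adj_iff_of_orderOf_eq {v w : nsbVertexSet H}
    (h : orderOf ((v : G) : G ⧸ H) = orderOf ((w : G) : G ⧸ H)) :
    (nsbPowerGraph G H).Adj v w ↔
      v ≠ w ∧ zpowers ((v : G) : G ⧸ H) = zpowers ((w : G) : G ⧸ H) := by
  simp only [nsbPowerGraph, QuotientGroup.mk_pow, Subtype.coe_ne_coe]
  rw [powerRelated_iff_zpowers_eq h]

theorem nsbPowerGraph_adj_one {v : nsbVertexSet H} (hv : (v : G) ≠ 1) :
    (nsbPowerGraph G H).Adj ⟨1, one_mem_nsbVertexSet⟩ v := by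
  refine ⟨hv.symm, Or.inl ⟨orderOf ((v : G) : G ⧸ H), orderOf_pos _, ?_⟩⟩
  rw [QuotientGroup.mk_pow, pow_orderOf_eq_one, QuotientGroup.mk_one]

end NsbPowerGraph

section GeneratorCosets

variable {G ι : Type*} [Group G] {H : Subgroup G} {a : ι → G}

-- the vertex set `(⋃ aᵢH) ∪ (⋃ aᵢ²H) ∪ {e}` of the theorem
def generatorCosetVertices (a : ι → G) : Set (nsbVertexSet H) :=
  {v | (∃ i, ((v : G) : G ⧸ H) = QuotientGroup.mk (a i) ∨
    ((v : G) : G ⧸ H) = QuotientGroup.mk ((a i) ^ 2)) ∨ (v : G) = 1}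

def generatorCosetOne (a : ι → G) : generatorCosetVertices (H := H) a :=
  ⟨⟨1, one_mem_nsbVertexSet⟩, Or.inr rfl⟩

theorem ne_generatorCosetOne_iff {v : generatorCosetVertices (H := H) a} :
    v ≠ generatorCosetOne a ↔ ((v : nsbVertexSet H) : G) ≠ 1 := by
  simp only [generatorCosetOne, Ne, Subtype.ext_iff]

variable [H.Normal]

theorem generatorCosetVertices_adj_one [Finite G] {v : generatorCosetVertices (H := H) a}
    (hv : v ≠ generatorCosetOne a) :
    ((nsbPowerGraph G H).induce (generatorCosetVertices a)).Adj (generatorCosetOne a) v :=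
  nsbPowerGraph_adj_one (ne_generatorCosetOne_iff.1 hv)

variable (hord : ∀ i, orderOf (a i : G ⧸ H) = 3)
include hord

theorem card_mk_eq_or_eq_sq (hcard : Nat.card H = 3) (i : ι) :
    Nat.card {g : G // (g : G ⧸ H) = a i ∨ (g : G ⧸ H) = ((a i ^ 2 : G) : G ⧸ H)} = 6 := by
  have hne : (a i : G ⧸ H) ≠ ((a i ^ 2 : G) : G ⧸ H) := by
    rw [QuotientGroup.mk_pow, pow_two, Ne, left_eq_mul]
    intro h1
    have h3 := hord i
    rw [h1, orderOf_one] at h3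
    omega
  change Nat.card (QuotientGroup.mk ⁻¹' {(a i : G ⧸ H), ((a i ^ 2 : G) : G ⧸ H)}) = 6
  rw [Nat.card_congr (QuotientGroup.preimageMkEquivSubgroupProdSet H _), Nat.card_prod,
    hcard, Nat.card_coe_set_eq, Set.ncard_pair hne]

variable [Finite G]

theorem zpowers_mk_eq_of_mk_eq {g : G} {i : ι}
    (h : (g : G ⧸ H) = a i ∨ (g : G ⧸ H) = ((a i ^ 2 : G) : G ⧸ H)) :
    zpowers (g : G ⧸ H) = zpowers (a i : G ⧸ H) := by
  rw [QuotientGroup.mk_pow] at h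
  exact zpowers_eq_of_eq_or_eq_sq (hord i) h

theorem orderOf_mk_eq_three {g : G}
    (h : ∃ i, (g : G ⧸ H) = a i ∨ (g : G ⧸ H) = ((a i ^ 2 : G) : G ⧸ H)) :
    orderOf (g : G ⧸ H) = 3 := by
  obtain ⟨i, hi⟩ := h
  rw [← Nat.card_zpowers, zpowers_mk_eq_of_mk_eq hord hi, Nat.card_zpowers, hord]

theorem notMem_of_exists_mk_eq {g : G}
    (h : ∃ i, (g : G ⧸ H) = a i ∨ (g : G ⧸ H) = ((a i ^ 2 : G) : G ⧸ H)) : g ∉ H := by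
  intro hg
  have h3 := orderOf_mk_eq_three hord h
  rw [(QuotientGroup.eq_one_iff g).2 hg, orderOf_one] at h3
  omega

variable (hB : Function.Injective fun i => zpowers (a i : G ⧸ H))
include hB

theorem mk_eq_or_eq_sq_iff_zpowers_eq {g : G}
    (hg : ∃ j, (g : G ⧸ H) = a j ∨ (g : G ⧸ H) = ((a j ^ 2 : G) : G ⧸ H)) (i : ι) :
    ((g : G ⧸ H) = a i ∨ (g : G ⧸ H) = ((a i ^ 2 : G) : G ⧸ H)) ↔
      zpowers (g : G ⧸ H) = zpowers (a i : G ⧸ H) := by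
  refine ⟨zpowers_mk_eq_of_mk_eq hord, fun h => ?_⟩
  obtain ⟨j, hj⟩ := hg
  rwa [← hB ((zpowers_mk_eq_of_mk_eq hord hj).symm.trans h)]

theorem nonempty_iso_induce_ne_generatorCosetOne [Finite ι] (hcard : Nat.card H = 3) :
    Nonempty ((((nsbPowerGraph G H).induce (generatorCosetVertices a)).induce
      {v | v ≠ generatorCosetOne a}) ≃g unionKGraph (Nat.card ι) 6) := by
  have hv (v : {v | v ≠ generatorCosetOne (H := H) a}) :
      ∃ i, ((v : nsbVertexSet H) : G ⧸ H) = a i ∨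
        ((v : nsbVertexSet H) : G ⧸ H) = ((a i ^ 2 : G) : G ⧸ H) :=
    v.1.2.resolve_right (ne_generatorCosetOne_iff.1 v.2)
  let π (v : {v | v ≠ generatorCosetOne (H := H) a}) : Set.range fun i => zpowers (a i : G ⧸ H) :=
    ⟨zpowers ((v : nsbVertexSet H) : G ⧸ H),
      (hv v).imp fun _ hi => (zpowers_mk_eq_of_mk_eq hord hi).symm⟩
  refine nonempty_iso_unionKGraph π (fun v w => ?_) (Nat.card_range_of_injective hB) ?_
  · change (nsbPowerGraph G H).Adj v w ↔ _
    rw [nsbPowerGraph_adj_iff_of_orderOf_eq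
      (by rw [orderOf_mk_eq_three hord (hv v), orderOf_mk_eq_three hord (hv w)])]
    simp only [π, Ne, Subtype.ext_iff]
  · rintro ⟨_, i, rfl⟩
    rw [← card_mk_eq_or_eq_sq hord hcard i]
    exact Nat.card_congr
      { toFun := fun v => ⟨v.1.1.1.1,
          (mk_eq_or_eq_sq_iff_zpowers_eq hord hB (hv v.1) i).2 (congrArg Subtype.val v.2)⟩
        invFun := fun g => ⟨⟨⟨⟨g, Or.inl (notMem_of_exists_mk_eq hord ⟨i, g.2⟩)⟩, Or.inl ⟨i, g.2⟩⟩,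
            ne_generatorCosetOne_iff.2 fun h1 => notMem_of_exists_mk_eq hord ⟨i, g.2⟩ (h1 ▸ H.one_mem)⟩,
          Subtype.ext (zpowers_mk_eq_of_mk_eq hord g.2)⟩
        left_inv := fun _ => rfl
        right_inv := fun _ => rfl }

end GeneratorCosets

/-- If `|H| = 3` and `G/H` has four distinct cyclic subgroups of order 3
generated by `a₁H, a₂H, a₃H, a₄H`, then the subgraph of `Γ_H(G)` induced by
`(⋃ aᵢH) ∪ (⋃ aᵢ²H) ∪ {e}` is isomorphic to `K₁ ∨ 4K₆`. -/
theorem statement_17 {G : Type*} [Group G] [Fintype G] (H : Subgroup G) [H.Normal]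
    (hcard : Nat.card H = 3) (a : Fin 4 → G)
    (hord : ∀ i, orderOf (QuotientGroup.mk (a i) : G ⧸ H) = 3)
    (hdist : ∀ i j, i ≠ j →
      Subgroup.zpowers (QuotientGroup.mk (a i) : G ⧸ H) ≠
        Subgroup.zpowers (QuotientGroup.mk (a j) : G ⧸ H)) :
    Nonempty (((nsbPowerGraph G H).induce
      {v : nsbVertexSet H |
        (∃ i, (QuotientGroup.mk (v : G) : G ⧸ H) = QuotientGroup.mk (a i) ∨
          (QuotientGroup.mk (v : G) : G ⧸ H) = QuotientGroup.mk ((a i) ^ 2)) ∨ (v : G) = 1})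
      ≃g graphJoin (kGraph 1) (unionKGraph 4 6)) := by
  have hB : Function.Injective fun i => zpowers (a i : G ⧸ H) :=
    fun i j h => by_contra fun hij => hdist i j hij h
  obtain ⟨e⟩ := nonempty_iso_induce_ne_generatorCosetOne hord hB hcard
  rw [Nat.card_fin] at e
  exact nonempty_iso_graphJoin_kGraph_one (generatorCosetOne a)
    (fun _ => generatorCosetVertices_adj_one) e
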